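/- (Loading) Let P be an RB-template (each letter of Σ_rdz labeling at most one edge) with reachability-unwinding P^⊸. For all b, n ∈ ℕ there exist N ∈ ℕ and a finite run π of the system (P^⊸)^N containing exactly b broadcast transitions, such that the final configuration f of π satisfies |f^{−1}((s, comp(b)))| ≥ n for every state s of the component P_{comp(b)}. -/

import Mathlib

/-! ### Core definitions: RB-templates and RB-systems -/

/-- Edge labels: a rendezvous letter `a_j` (an action together with an index in `[k]`),
or the broadcast letter `𝔟` (represented by `Sum.inr ()`). -/
abbrev Lab (k : ℕ) (A : Type) := (A × Fin k) ⊕ Unit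

/-- Edges of a labeled transition system over states `S`. -/
abbrev EdgeT (k : ℕ) (A S : Type) := S × Lab k A × S

/-- An RB-template: a set of initial states and a set of labeled edges. -/
structure RBTemplate (k : ℕ) (A : Type) (S : Type) where
  I : Set S
  R : Set (EdgeT k A S)

/-- Broadcast totality: every state has an outgoing broadcast edge. -/
def RBTemplate.BTotal {k : ℕ} {A S : Type} (P : RBTemplate k A S) : Prop :=
  ∀ s : S, ∃ t : S, (s, Sum.inr (), t) ∈ P.R

/-- Each rendezvous letter labels at most one edge. -/
def RBTemplate.UniqLab {k : ℕ} {A S : Type} (P : RBTemplate k A S) : Prop :=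
  ∀ (ς : A × Fin k) (s t s' t' : S),
    (s, Sum.inl ς, t) ∈ P.R → (s', Sum.inl ς, t') ∈ P.R → s = s' ∧ t = t'

/-- Synchronization label of a global transition of a system whose processes are
indexed by `ι`: either a broadcast, or a `k`-wise rendezvous on action `a` by the
processes `procs 0, …, procs (k-1)`. -/
inductive Sync (k : ℕ) (A : Type) (ι : Type) where
  | bcast : Sync k A ι
  | rdz (a : A) (procs : Fin k → ι) : Sync k A ι

/-- `(f, σ, g)` is a global transition of the system with processes indexed by `ι`. -/
def RBTrans {k : ℕ} {A S : Type} (P : RBTemplate k A S) {ι : Type}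
    (f : ι → S) (σ : Sync k A ι) (g : ι → S) : Prop :=
  match σ with
  | .bcast => ∀ i, (f i, Sum.inr (), g i) ∈ P.R
  | .rdz a procs =>
      Function.Injective procs ∧
      (∀ j : Fin k, (f (procs j), Sum.inl (a, j), g (procs j)) ∈ P.R) ∧
      (∀ i, (∀ j, procs j ≠ i) → g i = f i)

/-- Process `i` moves in a transition with synchronization label `σ`. -/
def Sync.Moved {k : ℕ} {A ι : Type} (σ : Sync k A ι) (i : ι) : Prop :=
  match σ with
  | .bcast => True
  | .rdz _ procs => ∃ j, procs j = i

/-- The edge of the template taken by process `i` in the global transition `(f, σ, g)`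
(`none` if `i` does not move). -/
noncomputable def edgeAt {k : ℕ} {A S ι : Type} (f g : ι → S) (σ : Sync k A ι) (i : ι) :
    Option (EdgeT k A S) :=
  match σ with
  | .bcast => some (f i, Sum.inr (), g i)
  | .rdz a procs =>
      letI := Classical.propDecidable (∃ j, procs j = i)
      if h : ∃ j, procs j = i then some (f i, Sum.inl (a, Classical.choose h), g i)
      else none

/-- A finite path of the RB-system with processes indexed by `ι`:
a length, configurations `conf 0, …, conf len`, and transitions between them. -/
structure FinPath {k : ℕ} {A S : Type} (P : RBTemplate k A S) (ι : Type) where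
  len : ℕ
  conf : ℕ → ι → S
  sync : ℕ → Sync k A ι
  valid : ∀ t, t < len → RBTrans P (conf t) (sync t) (conf (t + 1))

/-- An infinite path of the RB-system with processes indexed by `ι`. -/
structure InfPath {k : ℕ} {A S : Type} (P : RBTemplate k A S) (ι : Type) where
  conf : ℕ → ι → S
  sync : ℕ → Sync k A ι
  valid : ∀ t, RBTrans P (conf t) (sync t) (conf (t + 1))

/-- A finite run: a finite path starting at an initial configuration. -/
def FinPath.IsRun {k : ℕ} {A S : Type} {P : RBTemplate k A S} {ι : Type}
    (p : FinPath P ι) : Prop :=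
  ∀ i, p.conf 0 i ∈ P.I

/-- An infinite run: an infinite path starting at an initial configuration. -/
def InfPath.IsRun {k : ℕ} {A S : Type} {P : RBTemplate k A S} {ι : Type}
    (p : InfPath P ι) : Prop :=
  ∀ i, p.conf 0 i ∈ P.I

/-- The projection of a finite path onto process `i`: the sequence of edges taken by `i`. -/
noncomputable def FinPath.proj {k : ℕ} {A S : Type} {P : RBTemplate k A S} {ι : Type}
    (p : FinPath P ι) (i : ι) : List (EdgeT k A S) :=
  (List.range p.len).filterMap (fun t => edgeAt (p.conf t) (p.conf (t + 1)) (p.sync t) i)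

/-- The number of broadcast transitions on a finite path. -/
noncomputable def FinPath.bcasts {k : ℕ} {A S : Type} {P : RBTemplate k A S} {ι : Type}
    (p : FinPath P ι) : ℕ :=
  Nat.card {t : ℕ // t < p.len ∧ p.sync t = Sync.bcast}

/-- The set of finite executions of the RB-system induced by `P`: projections onto
process `0` of the finite runs of the systems `P^n`, `n ∈ ℕ`. -/
def execFin {k : ℕ} {A S : Type} (P : RBTemplate k A S) : Set (List (EdgeT k A S)) :=
  {w | ∃ n : ℕ, ∃ p : FinPath P (Fin (n + 1)), p.IsRun ∧ p.proj 0 = w}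

/-- The set of infinite executions of the RB-system induced by `P`: infinite projections
onto process `0` of the runs of the systems `P^n`, `n ∈ ℕ`.  Here `ι` enumerates, in
increasing order, exactly the transitions in which process `0` moves. -/
def execInf {k : ℕ} {A S : Type} (P : RBTemplate k A S) : Set (ℕ → EdgeT k A S) :=
  {w | ∃ n : ℕ, ∃ p : InfPath P (Fin (n + 1)), p.IsRun ∧
    ∃ ι : ℕ → ℕ, StrictMono ι ∧
      (∀ t, (p.sync t).Moved 0 ↔ ∃ m, ι m = t) ∧
      (∀ m, edgeAt (p.conf (ι m)) (p.conf (ι m + 1)) (p.sync (ι m)) 0 = some (w m))}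

/-! ### The reachability-unwinding -/

/-- `X` is closed under the saturation rule for the set `J` of initial states. -/
def SatClosed {k : ℕ} {A S : Type} (P : RBTemplate k A S) (J : Set S) (X : Set S) : Prop :=
  J ⊆ X ∧ ∀ (s : S) (a : A) (_h : Fin k) (t : S), s ∈ X → (s, Sum.inl (a, _h), t) ∈ P.R →
    (∀ l : Fin k, ∃ s' t' : S, s' ∈ X ∧ (s', Sum.inl (a, l), t') ∈ P.R) → t ∈ X

/-- The saturated state set `S_i` generated from the set `J` of initial states:
the least set containing `J` and closed under the saturation rule. -/
def SatS {k : ℕ} {A S : Type} (P : RBTemplate k A S) (J : Set S) : Set S :=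
  ⋂₀ {X | SatClosed P J X}

/-- The saturated edge set `R_i` generated from the set `J` of initial states. -/
def SatR {k : ℕ} {A S : Type} (P : RBTemplate k A S) (J : Set S) : Set (EdgeT k A S) :=
  {e | ∃ (s : S) (a : A) (h : Fin k) (t : S), e = (s, Sum.inl (a, h), t) ∧
    s ∈ SatS P J ∧ e ∈ P.R ∧
    ∀ l : Fin k, ∃ s' t' : S, s' ∈ SatS P J ∧ (s', Sum.inl (a, l), t') ∈ P.R}

/-- The initial-state sets `I_i` of the components `P_i` of the reachability-unwinding
(each component `P_i = (S_i, I_i, R_i)` is completely determined by `I_i`, via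
`S_i = SatS P (compI P i)` and `R_i = SatR P (compI P i)`). -/
def compI {k : ℕ} {A S : Type} (P : RBTemplate k A S) : ℕ → Set S
  | 0 => P.I
  | i + 1 => {s | ∃ h : S, h ∈ SatS P (compI P i) ∧ (h, Sum.inr (), s) ∈ P.R}

/-- `(n, m)` is the (least) lasso pair of the unwinding construction: the components
`P_0, …, P_m` are pairwise distinct and `P_n = P_{m+1}`.  The prefix length is `n` and
the period is `r = m + 1 - n`. -/
def IsLasso {k : ℕ} {A S : Type} (P : RBTemplate k A S) (n m : ℕ) : Prop :=
  n ≤ m ∧ compI P n = compI P (m + 1) ∧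
    ∀ i j : ℕ, i < j → j ≤ m → compI P i ≠ compI P j

/-- The component number associated with `i`, for the lasso pair `(n, m)`. -/
def compAt (n m i : ℕ) : ℕ := if i ≤ m then i else n + (i - n) % (m + 1 - n)

/-- The reachability-unwinding `P^⊸` of `P`, for the lasso pair `(n, m)`: states are
pairs (state of `P`, component number). -/
def unwind {k : ℕ} {A S : Type} (P : RBTemplate k A S) (n m : ℕ) :
    RBTemplate k A (S × ℕ) where
  I := {x | x.1 ∈ P.I ∧ x.2 = 0}
  R := {e | (∃ (s t : S) (ς : A × Fin k) (i : ℕ), i ≤ m ∧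
              e = ((s, i), Sum.inl ς, (t, i)) ∧ (s, Sum.inl ς, t) ∈ SatR P (compI P i)) ∨
            (∃ (s t : S) (i : ℕ), i ≤ m ∧
              e = ((s, i), Sum.inr (), (t, compAt n m (i + 1))) ∧
              s ∈ SatS P (compI P i) ∧ (s, Sum.inr (), t) ∈ P.R)}

/-- Erasing the component numbers from an edge of the unwinding. -/
def erE {k : ℕ} {A S : Type} (e : EdgeT k A (S × ℕ)) : EdgeT k A S :=
  (e.1.1, e.2.1, e.2.2.1)

/-!
Every state `s` of the component `P_(comp b)` can be *loaded*: some run with `b` broadcasts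
ends with all processes inside that component and one of them in `(s, comp b)`. This is shown
by induction on `b` and, for fixed `b`, by induction along the saturation defining `S_(comp b)`:
a new target `t` of an edge `(s, a_h, t)` is reached by first loading, on distinct processes,
sources of all `k` edges `a_1, …, a_k` and then firing the rendezvous on `a`. Runs with the same
number of broadcasts can be executed side by side on disjoint sets of processes, synchronising
only on the broadcasts, so loading single states yields `n` processes in every state at once.
-/

open Function Relation

section Saturation

variable {k : ℕ} {A S : Type}

theorem satClosed_satS (P : RBTemplate k A S) (J : Set S) : SatClosed P J (SatS P J) := by
  refine ⟨fun s hs X hX => hX.1 hs, fun s a h t hs he hside X hX => ?_⟩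
  refine hX.2 s a h t (hs X hX) he fun l => ?_
  obtain ⟨s', t', hs', he'⟩ := hside l
  exact ⟨s', t', hs' X hX, he'⟩

theorem subset_satS (P : RBTemplate k A S) (J : Set S) : J ⊆ SatS P J :=
  (satClosed_satS P J).1

theorem satS_induction {P : RBTemplate k A S} {J : Set S} {Q : S → Prop}
    (base : ∀ s ∈ J, Q s)
    (step : ∀ (s : S) (a : A) (h : Fin k) (t : S), Q s → (s, Sum.inl (a, h), t) ∈ P.R →
      (∀ l : Fin k, ∃ s' t' : S, Q s' ∧ (s', Sum.inl (a, l), t') ∈ P.R) → Q t) :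
    ∀ s ∈ SatS P J, Q s :=
  fun _ hs => hs {s | Q s} ⟨base, step⟩

end Saturation

section Lasso

variable {k : ℕ} {A S : Type} {P : RBTemplate k A S} {n m : ℕ}

theorem compI_add_period (hnm : n ≤ m) (hp : compI P n = compI P (m + 1)) {j : ℕ}
    (hj : n ≤ j) : compI P (j + (m + 1 - n)) = compI P j := by
  induction j, hj using Nat.le_induction with
  | base => rw [show n + (m + 1 - n) = m + 1 by omega, hp]
  | succ j _ ih =>
    rw [show j + 1 + (m + 1 - n) = j + (m + 1 - n) + 1 by omega]
    simp only [compI, ih]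

theorem compI_add_mul_period (hnm : n ≤ m) (hp : compI P n = compI P (m + 1)) {j : ℕ}
    (hj : n ≤ j) (q : ℕ) : compI P (j + q * (m + 1 - n)) = compI P j := by
  induction q with
  | zero => simp
  | succ q ih =>
    rw [add_mul, one_mul, ← add_assoc, compI_add_period hnm hp (by omega), ih]

theorem compI_compAt (hnm : n ≤ m) (hp : compI P n = compI P (m + 1)) (i : ℕ) :
    compI P (compAt n m i) = compI P i := by
  unfold compAt
  split_ifs with hi
  · rfl
  · conv_rhs => rw [← Nat.add_sub_cancel' (show n ≤ i by omega),
      ← Nat.mod_add_div' (i - n) (m + 1 - n), ← add_assoc]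
    exact (compI_add_mul_period hnm hp (Nat.le_add_right _ _) _).symm

theorem compAt_le (hnm : n ≤ m) (i : ℕ) : compAt n m i ≤ m := by
  unfold compAt
  split_ifs
  · assumption
  · have := Nat.mod_lt (i - n) (show 0 < m + 1 - n by omega)
    omega

theorem compAt_zero : compAt n m 0 = 0 :=
  if_pos (Nat.zero_le m)

theorem compAt_compAt_add_one (hnm : n ≤ m) (b : ℕ) :
    compAt n m (compAt n m b + 1) = compAt n m (b + 1) := by
  unfold compAt
  by_cases hb : b ≤ m
  · simp [hb]
  set r := m + 1 - n with hr
  set y := (b - n) % r with hy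
  have hyr : y < r := Nat.mod_lt _ (by omega)
  have hsucc : (b + 1 - n) % r = (y + 1) % r := by
    rw [hy, Nat.mod_add_mod, show b + 1 - n = b - n + 1 by omega]
  rw [if_neg hb, if_neg (show ¬b + 1 ≤ m by omega), hsucc, show n + y + 1 - n = y + 1 by omega]
  split_ifs
  · rw [Nat.mod_eq_of_lt (by omega), add_assoc]
  · rfl

end Lasso

section Reach

variable {k : ℕ} {A St ι ι' : Type} {U : RBTemplate k A St}

variable (U) in
def RdzStep (f g : ι → St) : Prop :=
  ∃ (a : A) (procs : Fin k → ι), RBTrans U f (.rdz a procs) g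

variable (U) in
def Reach (f : ι → St) : ℕ → (ι → St) → Prop
  | 0, g => ReflTransGen (RdzStep U) f g
  | b + 1, g => ∃ p q, Reach f b p ∧ RBTrans U p .bcast q ∧ ReflTransGen (RdzStep U) q g

theorem Reach.tail_rdz {f g g' : ι → St} {b : ℕ} (h : Reach U f b g) (hg : RdzStep U g g') :
    Reach U f b g' := by
  cases b with
  | zero => exact ReflTransGen.tail h hg
  | succ b =>
    obtain ⟨p, q, hp, hpq, hq⟩ := h
    exact ⟨p, q, hp, hpq, hq.tail hg⟩

theorem Reach.succ_of_bcast {f g g' : ι → St} {b : ℕ} (h : Reach U f b g)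
    (hg : RBTrans U g .bcast g') : Reach U f (b + 1) g' :=
  ⟨g, g', h, hg, .refl⟩

theorem reach_of_isEmpty [IsEmpty ι] (f g : ι → St) (b : ℕ) : Reach U f b g := by
  induction b generalizing g with
  | zero => exact Subsingleton.elim f g ▸ .refl
  | succ b ih => exact (ih g).succ_of_bcast isEmptyElim

theorem RdzStep.sumElim_left {f g : ι → St} (h : RdzStep U f g) (e : ι' → St) :
    RdzStep U (Sum.elim f e) (Sum.elim g e) := by
  obtain ⟨a, procs, hinj, hedge, hfix⟩ := h
  refine ⟨a, Sum.inl ∘ procs, Sum.inl_injective.comp hinj, hedge, ?_⟩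
  rintro (i | i) hi
  · exact hfix i fun j hj => hi j (congrArg Sum.inl hj)
  · rfl

theorem RdzStep.sumElim_right {f g : ι' → St} (h : RdzStep U f g) (e : ι → St) :
    RdzStep U (Sum.elim e f) (Sum.elim e g) := by
  obtain ⟨a, procs, hinj, hedge, hfix⟩ := h
  refine ⟨a, Sum.inr ∘ procs, Sum.inr_injective.comp hinj, hedge, ?_⟩
  rintro (i | i) hi
  · rfl
  · exact hfix i fun j hj => hi j (congrArg Sum.inr hj)

theorem rdzReach_sumElim {f₁ g₁ : ι → St} {f₂ g₂ : ι' → St}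
    (h₁ : ReflTransGen (RdzStep U) f₁ g₁) (h₂ : ReflTransGen (RdzStep U) f₂ g₂) :
    ReflTransGen (RdzStep U) (Sum.elim f₁ f₂) (Sum.elim g₁ g₂) :=
  (h₁.lift (Sum.elim · f₂) fun _ _ h => h.sumElim_left f₂).trans
    (h₂.lift (Sum.elim g₁ ·) fun _ _ h => h.sumElim_right g₁)

theorem Reach.sumElim {f₁ g₁ : ι → St} {f₂ g₂ : ι' → St} {b : ℕ} (h₁ : Reach U f₁ b g₁)
    (h₂ : Reach U f₂ b g₂) : Reach U (Sum.elim f₁ f₂) b (Sum.elim g₁ g₂) := by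
  induction b generalizing g₁ g₂ with
  | zero => exact rdzReach_sumElim h₁ h₂
  | succ b ih =>
    obtain ⟨p₁, q₁, hp₁, hpq₁, hq₁⟩ := h₁
    obtain ⟨p₂, q₂, hp₂, hpq₂, hq₂⟩ := h₂
    exact ⟨Sum.elim p₁ p₂, Sum.elim q₁ q₂, ih hp₁ hp₂, Sum.forall.2 ⟨hpq₁, hpq₂⟩,
      rdzReach_sumElim hq₁ hq₂⟩

theorem RdzStep.comp_equiv {f g : ι → St} (h : RdzStep U f g) (e : ι' ≃ ι) :
    RdzStep U (f ∘ e) (g ∘ e) := by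
  obtain ⟨a, procs, hinj, hedge, hfix⟩ := h
  refine ⟨a, e.symm ∘ procs, e.symm.injective.comp hinj, fun j => ?_, fun i hi => ?_⟩
  · simpa using hedge j
  · exact hfix (e i) fun j hj => hi j (by simp [hj])

theorem Reach.comp_equiv {f g : ι → St} {b : ℕ} (h : Reach U f b g) (e : ι' ≃ ι) :
    Reach U (f ∘ e) b (g ∘ e) := by
  induction b generalizing g with
  | zero => exact h.lift (· ∘ e) fun _ _ h => h.comp_equiv e
  | succ b ih =>
    obtain ⟨p, q, hp, hpq, hq⟩ := h
    exact ⟨p ∘ e, q ∘ e, ih hp, fun i => hpq (e i), hq.lift (· ∘ e) fun _ _ h => h.comp_equiv e⟩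

end Reach

section FinPath

variable {k : ℕ} {A St ι : Type} {U : RBTemplate k A St}

def FinPath.nil (f : ι → St) : FinPath U ι :=
  ⟨0, fun _ => f, fun _ => .bcast, fun _ ht => absurd ht (Nat.not_lt_zero _)⟩

theorem FinPath.bcasts_nil (f : ι → St) : (FinPath.nil (U := U) f).bcasts = 0 := by
  simp [FinPath.bcasts, FinPath.nil]

def FinPath.snoc (π : FinPath U ι) {σ : Sync k A ι} {g : ι → St}
    (tr : RBTrans U (π.conf π.len) σ g) : FinPath U ι where
  len := π.len + 1
  conf t := if t ≤ π.len then π.conf t else g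
  sync t := if t < π.len then π.sync t else σ
  valid t ht := by
    rcases Nat.lt_succ_iff_lt_or_eq.1 ht with ht | rfl
    · simpa [ht.le, Nat.succ_le_of_lt ht, ht] using π.valid t ht
    · simpa using tr

open Classical in
theorem FinPath.bcasts_eq_sum (π : FinPath U ι) :
    π.bcasts = ∑ t ∈ Finset.range π.len, if π.sync t = .bcast then 1 else 0 := by
  rw [FinPath.bcasts, ← Finset.card_filter, ← Nat.card_eq_finsetCard]
  exact Nat.card_congr (Equiv.subtypeEquivRight fun t => by simp)

open Classical in
theorem FinPath.bcasts_snoc (π : FinPath U ι) {σ : Sync k A ι} {g : ι → St}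
    (tr : RBTrans U (π.conf π.len) σ g) :
    (π.snoc tr).bcasts = π.bcasts + if σ = .bcast then 1 else 0 := by
  rw [bcasts_eq_sum, bcasts_eq_sum]
  simp only [FinPath.snoc, Finset.sum_range_succ, lt_irrefl, if_false]
  congr 1
  exact Finset.sum_congr rfl fun t ht => by simp [Finset.mem_range.1 ht]

theorem FinPath.exists_extend_rdz (π : FinPath U ι) {g : ι → St}
    (h : ReflTransGen (RdzStep U) (π.conf π.len) g) :
    ∃ π' : FinPath U ι, π'.conf 0 = π.conf 0 ∧ π'.conf π'.len = g ∧ π'.bcasts = π.bcasts := by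
  induction h with
  | refl => exact ⟨π, rfl, rfl, rfl⟩
  | tail _ hstep ih =>
    obtain ⟨π', h0, hlen, hb⟩ := ih
    obtain ⟨a, procs, tr⟩ := hstep
    refine ⟨π'.snoc (hlen ▸ tr), by simpa [FinPath.snoc] using h0, by simp [FinPath.snoc], ?_⟩
    simp [FinPath.bcasts_snoc, hb]

theorem Reach.exists_finPath {f g : ι → St} {b : ℕ} (h : Reach U f b g) :
    ∃ π : FinPath U ι, π.conf 0 = f ∧ π.conf π.len = g ∧ π.bcasts = b := by
  induction b generalizing g with
  | zero =>
    obtain ⟨π, h0, hlen, hb⟩ := (FinPath.nil f).exists_extend_rdz h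
    exact ⟨π, h0, hlen, hb.trans (FinPath.bcasts_nil f)⟩
  | succ b ih =>
    obtain ⟨p, q, hp, hpq, hq⟩ := h
    obtain ⟨π, h0, hlen, hb⟩ := ih hp
    obtain ⟨π', h0', hlen', hb'⟩ := (π.snoc (hlen ▸ hpq)).exists_extend_rdz
      (by simpa [FinPath.snoc] using hq)
    refine ⟨π', by simpa [FinPath.snoc, h0] using h0', hlen', ?_⟩
    rw [hb', FinPath.bcasts_snoc, hb, if_pos rfl]

end FinPath

section Loading

variable {k : ℕ} {A S : Type} {P : RBTemplate k A S} {n₀ m : ℕ}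

theorem unwind_rdz_mem {s t : S} {ς : A × Fin k} {i : ℕ} (him : i ≤ m)
    (h : (s, Sum.inl ς, t) ∈ SatR P (compI P i)) :
    ((s, i), Sum.inl ς, (t, i)) ∈ (unwind P n₀ m).R :=
  Or.inl ⟨s, t, ς, i, him, rfl, h⟩

theorem unwind_bcast_mem_compAt (hL : IsLasso P n₀ m) {b : ℕ} {s t : S}
    (hs : s ∈ SatS P (compI P (compAt n₀ m b))) (h : (s, Sum.inr (), t) ∈ P.R) :
    ((s, compAt n₀ m b), Sum.inr (), (t, compAt n₀ m (b + 1))) ∈ (unwind P n₀ m).R ∧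
      (t, compAt n₀ m (b + 1)) ∈
        SatS P (compI P (compAt n₀ m (b + 1))) ×ˢ {compAt n₀ m (b + 1)} := by
  rw [← compAt_compAt_add_one hL.1, compI_compAt hL.1 hL.2.1]
  exact ⟨Or.inr ⟨s, t, _, compAt_le hL.1 b, rfl, hs, h⟩, subset_satS P _ ⟨s, hs, h⟩, rfl⟩

variable (P n₀ m) in
def Loads (b : ℕ) {κ : Type} (D : κ → S) : Prop :=
  ∃ (ι : Type) (_ : Finite ι) (f g : ι → S × ℕ) (ρ : κ → ι),
    (∀ i, f i ∈ (unwind P n₀ m).I) ∧ Reach (unwind P n₀ m) f b g ∧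
    (∀ i, g i ∈ SatS P (compI P (compAt n₀ m b)) ×ˢ {compAt n₀ m b}) ∧
    Injective ρ ∧ ∀ x, g (ρ x) = (D x, compAt n₀ m b)

theorem loads_of_isEmpty {κ : Type} [IsEmpty κ] (b : ℕ) (D : κ → S) : Loads P n₀ m b D :=
  ⟨κ, inferInstance, isEmptyElim, isEmptyElim, id, isEmptyElim, reach_of_isEmpty _ _ b,
    isEmptyElim, injective_id, isEmptyElim⟩

theorem loads_initial {s : S} (hs : s ∈ P.I) : Loads P n₀ m 0 fun _ : Unit => s := by
  unfold Loads
  rw [compAt_zero]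
  exact ⟨Unit, inferInstance, fun _ => (s, 0), fun _ => (s, 0), id, fun _ => ⟨hs, rfl⟩, .refl,
    fun _ => ⟨subset_satS P _ hs, rfl⟩, injective_id, fun _ => rfl⟩

theorem Loads.comp_injective {κ κ' : Type} {b : ℕ} {D : κ → S} (h : Loads P n₀ m b D)
    {e : κ' → κ} (he : Injective e) : Loads P n₀ m b (D ∘ e) := by
  obtain ⟨ι, _, f, g, ρ, hf, hfg, hg, hρ, hgρ⟩ := h
  exact ⟨ι, inferInstance, f, g, ρ ∘ e, hf, hfg, hg, hρ.comp he, fun x => hgρ (e x)⟩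

theorem Loads.sumElim {κ κ' : Type} {b : ℕ} {D : κ → S} {D' : κ' → S}
    (h : Loads P n₀ m b D) (h' : Loads P n₀ m b D') : Loads P n₀ m b (Sum.elim D D') := by
  obtain ⟨ι, _, f, g, ρ, hf, hfg, hg, hρ, hgρ⟩ := h
  obtain ⟨ι', _, f', g', ρ', hf', hfg', hg', hρ', hgρ'⟩ := h'
  exact ⟨ι ⊕ ι', inferInstance, Sum.elim f f', Sum.elim g g', Sum.map ρ ρ',
    Sum.forall.2 ⟨hf, hf'⟩, hfg.sumElim hfg', Sum.forall.2 ⟨hg, hg'⟩, hρ.sumMap hρ',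
    Sum.forall.2 ⟨hgρ, hgρ'⟩⟩

theorem Loads.of_forall {κ : Type} [Finite κ] {b : ℕ} (D : κ → S)
    (h : ∀ x, Loads P n₀ m b fun _ : Unit => D x) : Loads P n₀ m b D := by
  induction κ using Finite.induction_empty_option with
  | of_equiv e ih =>
    simpa [Function.comp_assoc] using
      (ih (D ∘ e) fun x => h (e x)).comp_injective e.symm.injective
  | h_empty => exact loads_of_isEmpty b D
  | h_option ih =>
    have := ((ih (D ∘ some) fun x => h (some x)).sumElim (h none)).comp_injective
      (Equiv.optionEquivSumPUnit _).injective
    convert this using 1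
    ext (_ | _) <;> rfl

theorem Loads.rdz (hnm : n₀ ≤ m) {b : ℕ} {a : A} {X Y : Fin k → S} (h : Loads P n₀ m b X)
    (hE : ∀ l, (X l, Sum.inl (a, l), Y l) ∈ P.R) : Loads P n₀ m b Y := by
  obtain ⟨ι, _, f, g, ρ, hf, hfg, hg, hρ, hgρ⟩ := h
  set c := compAt n₀ m b
  have hX : ∀ l, X l ∈ SatS P (compI P c) := fun l => by simpa [hgρ] using (hg (ρ l)).1
  have hside : ∀ l, ∃ s' t', s' ∈ SatS P (compI P c) ∧ (s', Sum.inl (a, l), t') ∈ P.R :=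
    fun l => ⟨X l, Y l, hX l, hE l⟩
  obtain ⟨g', hg'ρ, hg'⟩ : ∃ g' : ι → S × ℕ,
      (∀ l, g' (ρ l) = (Y l, c)) ∧ ∀ i, (¬∃ l, ρ l = i) → g' i = g i :=
    ⟨extend ρ _ g, hρ.extend_apply _ g, fun i hi => extend_apply' _ g i hi⟩
  have tr : RBTrans (unwind P n₀ m) g (.rdz a ρ) g' := by
    refine ⟨hρ, fun l => ?_, fun i hi => hg' i fun ⟨l, hl⟩ => hi l hl⟩
    rw [hgρ, hg'ρ]
    exact unwind_rdz_mem (compAt_le hnm b) ⟨_, _, _, _, rfl, hX l, hE l, hside⟩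
  refine ⟨ι, inferInstance, f, g', ρ, hf, hfg.tail_rdz ⟨a, ρ, tr⟩, fun i => ?_, hρ, hg'ρ⟩
  by_cases hi : ∃ l, ρ l = i
  · obtain ⟨l, rfl⟩ := hi
    rw [hg'ρ]
    exact ⟨(satClosed_satS P _).2 _ a l _ (hX l) (hE l) hside, rfl⟩
  · rw [hg' i hi]
    exact hg i

theorem Loads.bcast (hTot : P.BTotal) (hL : IsLasso P n₀ m) {b : ℕ} {κ : Type} {D E : κ → S}
    (h : Loads P n₀ m b D) (hE : ∀ x, (D x, Sum.inr (), E x) ∈ P.R) :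
    Loads P n₀ m (b + 1) E := by
  obtain ⟨ι, _, f, g, ρ, hf, hfg, hg, hρ, hgρ⟩ := h
  choose tgt htgt using fun i => hTot (g i).1
  set c' := compAt n₀ m (b + 1)
  obtain ⟨g', hg'ρ, hg'⟩ : ∃ g' : ι → S × ℕ,
      (∀ x, g' (ρ x) = (E x, c')) ∧ ∀ i, (¬∃ x, ρ x = i) → g' i = (tgt i, c') :=
    ⟨extend ρ _ _, hρ.extend_apply _ _, fun i hi => extend_apply' _ _ i hi⟩
  have step : ∀ i, (g i, Sum.inr (), g' i) ∈ (unwind P n₀ m).R ∧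
      g' i ∈ SatS P (compI P c') ×ˢ {c'} := by
    intro i
    by_cases hi : ∃ x, ρ x = i
    · obtain ⟨x, rfl⟩ := hi
      rw [hg'ρ, hgρ]
      have hD : D x ∈ SatS P (compI P (compAt n₀ m b)) := by simpa [hgρ] using (hg (ρ x)).1
      exact unwind_bcast_mem_compAt hL hD (hE x)
    · rw [hg' i hi, show g i = ((g i).1, compAt n₀ m b) from Prod.ext rfl (hg i).2]
      exact unwind_bcast_mem_compAt hL (hg i).1 (htgt i)
  exact ⟨ι, inferInstance, f, g', ρ, hf, hfg.succ_of_bcast fun i => (step i).1,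
    fun i => (step i).2, hρ, hg'ρ⟩

theorem loads_of_mem_satS (hTot : P.BTotal) (hL : IsLasso P n₀ m) (b : ℕ) :
    ∀ s ∈ SatS P (compI P (compAt n₀ m b)), Loads P n₀ m b fun _ : Unit => s := by
  refine satS_induction (fun s hs => ?_) fun x a h t hx he hside => ?_
  · cases b with
    | zero => exact loads_initial (by rwa [compAt_zero] at hs)
    | succ b =>
      rw [compI_compAt hL.1 hL.2.1] at hs
      obtain ⟨s₀, hs₀, he⟩ := hs
      rw [← compI_compAt hL.1 hL.2.1] at hs₀
      exact (loads_of_mem_satS hTot hL b s₀ hs₀).bcast hTot hL fun _ => he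
  · choose xs ys hxs hes using hside
    have hE : ∀ l, (update xs h x l, Sum.inl (a, l), update ys h t l) ∈ P.R := by
      intro l
      rcases eq_or_ne l h with rfl | hl
      · simpa using he
      · simpa [hl] using hes l
    have hX : Loads P n₀ m b (update xs h x) :=
      Loads.of_forall _ fun l => by
        rcases eq_or_ne l h with rfl | hl
        · simpa using hx
        · simpa [hl] using hxs l
    simpa [comp_def] using (hX.rdz hL.1 hE).comp_injective (e := fun _ : Unit => h) fun _ _ _ => rfl

theorem Loads.exists_run {b : ℕ} {κ : Type} {D : κ → S} (h : Loads P n₀ m b D) :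
    ∃ (N : ℕ) (π : FinPath (unwind P n₀ m) (Fin N)), π.IsRun ∧ π.bcasts = b ∧
      ∀ s, Nat.card {x // D x = s} ≤
        Nat.card {i : Fin N // π.conf π.len i = (s, compAt n₀ m b)} := by
  obtain ⟨ι, _, f, g, ρ, hf, hfg, -, hρ, hgρ⟩ := h
  let e := (Finite.equivFin ι).symm
  obtain ⟨π, h0, hlen, hb⟩ := (hfg.comp_equiv e).exists_finPath
  refine ⟨Nat.card ι, π, fun i => h0 ▸ hf (e i), hb, fun s => ?_⟩
  refine Nat.card_le_card_of_injective (fun x => ⟨e.symm (ρ x), ?_⟩) fun x y hxy => ?_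
  · simp [hlen, e, hgρ, x.2]
  · exact Subtype.ext (hρ (e.symm.injective (congrArg Subtype.val hxy)))

end Loading

theorem loading_general
    {k : ℕ} {A S : Type} [Fintype S]
    (P : RBTemplate k A S) (hTot : P.BTotal)
    (n₀ m : ℕ) (hL : IsLasso P n₀ m) (b n : ℕ) :
    ∃ (N : ℕ) (π : FinPath (unwind P n₀ m) (Fin N)), π.IsRun ∧ π.bcasts = b ∧
      ∀ s : S, s ∈ SatS P (compI P (compAt n₀ m b)) →
        n ≤ Nat.card {i : Fin N // π.conf π.len i = (s, compAt n₀ m b)} := by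
  have hloads : Loads P n₀ m b fun x : SatS P (compI P (compAt n₀ m b)) × Fin n => x.1.1 :=
    Loads.of_forall _ fun x => loads_of_mem_satS hTot hL b x.1.1 x.1.2
  obtain ⟨N, π, hrun, hb, hcard⟩ := hloads.exists_run
  refine ⟨N, π, hrun, hb, fun s hs => le_trans ?_ (hcard s)⟩
  calc n = Nat.card (Fin n) := (Nat.card_fin n).symm
    _ ≤ _ := Nat.card_le_card_of_injective (fun j => ⟨(⟨s, hs⟩, j), rfl⟩)
      fun j j' h => by simpa using h

/-- **Loading.** For all `b, n` there is a finite run of some system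
`(P^⊸)^N` with exactly `b` broadcast transitions whose final configuration has at
least `n` processes in every state of the component `P_(comp b)`. -/
theorem loading
    {k : ℕ} {A S : Type} [Fintype A] [Fintype S] (hk : 2 ≤ k)
    (P : RBTemplate k A S) (hTot : P.BTotal) (hU : P.UniqLab)
    (n₀ m : ℕ) (hL : IsLasso P n₀ m) (b n : ℕ) :
    ∃ (N : ℕ) (π : FinPath (unwind P n₀ m) (Fin N)), π.IsRun ∧ π.bcasts = b ∧
      ∀ s : S, s ∈ SatS P (compI P (compAt n₀ m b)) →
        n ≤ Nat.card {i : Fin N // π.conf π.len i = (s, compAt n₀ m b)} :=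
  loading_general P hTot n₀ m hL b n
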